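/- There exists a finite GSEM (the shell-game model M_shell, with binary endogenous variables S_1, S_2, Z, a single context, and allowed interventions I = {S_1←1, S_2←1}, where F(u, S_1←1) = {(S_1=1, S_2=1, Z=1)} and F(u, S_2←1) = {(S_1=1, S_2=1, Z=0)}) that satisfies all axioms of AX+, but for which no SEM over the same signature has the same outcomes. Hence finite GSEMs with restricted allowed interventions are strictly more expressive than SEMs. -/
import Mathlib


namespace Causal

/-- An outcome assigns a value to every endogenous variable. -/
abbrev Outcome (V : Type) (R : V → Type) := ∀ v, R v

/-- An intervention is a partial assignment of values to endogenous variables. -/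
abbrev Intv (V : Type) (R : V → Type) := ∀ v, Option (R v)

/-- The set of variables targeted by an intervention. -/
def dom {V : Type} {R : V → Type} (I : Intv V R) : Set V := {v | I v ≠ none}

/-- An outcome agrees with an intervention on its domain. -/
def consistent {V : Type} {R : V → Type} (I : Intv V R) (o : Outcome V R) : Prop :=
  ∀ v a, I v = some a → o v = a

/-- Composition of interventions: the second intervention overrides the first. -/
def comp {V : Type} {R : V → Type} (I J : Intv V R) : Intv V R :=
  fun v => (J v).orElse (fun _ => I v)

/-- A causal model maps contexts and interventions to sets of outcomes. -/
abbrev CModel (Ctx V : Type) (R : V → Type) := Ctx → Intv V R → Set (Outcome V R)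

/-- A structural-equations model: each endogenous variable `X` has a structural
equation determining its value from the context and the values of the other variables. -/
structure SEM (Ctx V : Type) (R : V → Type) where
  F : ∀ X : V, Ctx → (∀ Y, Y ≠ X → R Y) → R X

/-- Outcomes of a SEM under a context and intervention: solutions of the structural
equations, where intervened variables instead take their prescribed values. -/
def SEM.outcomes {Ctx V : Type} {R : V → Type} (M : SEM Ctx V R) (u : Ctx)
    (I : Intv V R) : Set (Outcome V R) :=
  {o | ∀ X, match I X with
    | some a => o X = a
    | none => o X = M.F X u (fun Y _ => o Y)}

/-- Extend an intervention by additionally setting variable `X` to `a`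
(overriding any previous value for `X`). -/
def setVar {V : Type} {R : V → Type} [DecidableEq V] (I : Intv V R) (X : V) (a : R X) :
    Intv V R :=
  fun v => if h : v = X then some (cast (show R X = R v by rw [h]) a) else I v

/-- Validity of all axioms of `AX⁺` restricted to the allowed interventions `𝓘`
(only instances mentioning allowed interventions are required; D0, D1, D2, D7,
D8 are valid in every causal model under the present semantics). -/
def SatisfiesAXplusOn {Ctx V : Type} {R : V → Type} [DecidableEq V]
    (M : CModel Ctx V R) (𝓘 : Set (Intv V R)) : Prop :=
  -- D3 (composition)
  (∀ (u : Ctx), ∀ I ∈ 𝓘, ∀ (W : V) (w : R W), setVar I W w ∈ 𝓘 →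
    ∀ (S : Set V) (t : Outcome V R),
      (∃ o ∈ M u I, o W = w ∧ ∀ Y ∈ S, o Y = t Y) →
      ∃ o ∈ M u (setVar I W w), ∀ Y ∈ S, o Y = t Y) ∧
  -- D4 (effectiveness)
  (∀ (u : Ctx), ∀ I ∈ 𝓘, ∀ o ∈ M u I, consistent I o) ∧
  -- D5 (reversibility)
  (∀ (u : Ctx), ∀ I ∈ 𝓘, ∀ (W Y : V), W ≠ Y → W ∉ dom I → Y ∉ dom I →
    ∀ t : Outcome V R, setVar I Y (t Y) ∈ 𝓘 → setVar I W (t W) ∈ 𝓘 →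
      (∃ o ∈ M u (setVar I Y (t Y)), o W = t W ∧
          ∀ Z, Z ∉ dom I → Z ≠ W → Z ≠ Y → o Z = t Z) →
      (∃ o ∈ M u (setVar I W (t W)), o Y = t Y ∧
          ∀ Z, Z ∉ dom I → Z ≠ W → Z ≠ Y → o Z = t Z) →
      ∃ o ∈ M u I, o W = t W ∧ o Y = t Y ∧
          ∀ Z, Z ∉ dom I → Z ≠ W → Z ≠ Y → o Z = t Z) ∧
  -- D9 (unique outcomes for V \ {X})
  (∀ (u : Ctx) (X : V), ∀ I ∈ 𝓘, dom I = {v | v ≠ X} →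
    (M u I).Nonempty ∧ ∀ o ∈ M u I, ∀ o' ∈ M u I, o X = o' X)

/-- The three endogenous variables of the shell game. -/
inductive V3 : Type where
  | S1 | S2 | Z
deriving DecidableEq

instance : Fintype V3 :=
  ⟨⟨{V3.S1, V3.S2, V3.Z}, by decide⟩, by intro x; cases x <;> decide⟩

/-- All three variables are binary. -/
abbrev Rb : V3 → Type := fun _ => Bool

/-- The intervention `S₁ ← 1`. -/
def I1 : Intv V3 Rb := fun v => match v with | .S1 => some true | _ => none

/-- The intervention `S₂ ← 1`. -/
def I2 : Intv V3 Rb := fun v => match v with | .S2 => some true | _ => none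

/-- The set of allowed interventions of the shell game. -/
def Ishell : Set (Intv V3 Rb) := {I1, I2}

/-- The outcome `(S₁ = 1, S₂ = 1, Z = 1)`. -/
def v0 : Outcome V3 Rb := fun _ => true

/-- The outcome `(S₁ = 1, S₂ = 1, Z = 0)`. -/
def v1 : Outcome V3 Rb := fun v => match v with | .Z => false | _ => true

open scoped Classical in
/-- The shell-game GSEM: `F(u, S₁ ← 1) = {(1,1,1)}`, `F(u, S₂ ← 1) = {(1,1,0)}`. -/
noncomputable def Fshell : CModel Unit V3 Rb := fun _ I =>
  if I = I1 then {v0} else if I = I2 then {v1} else ∅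

lemma I1_ne_I2 : I1 ≠ I2 := by
  intro h
  have := congrFun h V3.S1
  simp [I1, I2] at this

lemma Fshell_I1 (u : Unit) : Fshell u I1 = {v0} := by simp [Fshell]

lemma Fshell_I2 (u : Unit) : Fshell u I2 = {v1} := by
  simp [Fshell, I1_ne_I2.symm]

lemma mem_Ishell {I : Intv V3 Rb} (h : I ∈ Ishell) : I = I1 ∨ I = I2 := h

lemma setVar_I1 {W : V3} {w : Bool} (h : setVar I1 W w ∈ Ishell) :
    setVar I1 W w = I1 := by
  rcases mem_Ishell h with h | h
  · exact h
  · exfalso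
    have := congrFun h V3.S1
    rcases Decidable.em (V3.S1 = W) with hw | hw <;> simp [setVar, hw, I1, I2] at this

lemma setVar_I2 {W : V3} {w : Bool} (h : setVar I2 W w ∈ Ishell) :
    setVar I2 W w = I2 := by
  rcases mem_Ishell h with h | h
  · exfalso
    have := congrFun h V3.S2
    rcases Decidable.em (V3.S2 = W) with hw | hw <;> simp [setVar, hw, I1, I2] at this
  · exact h

lemma not_setVar_I1 {Y : V3} {b : Bool} (hY : Y ≠ V3.S1) :
    setVar I1 Y b ∉ Ishell := by
  intro h
  have := congrFun (setVar_I1 h) Y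
  simp [setVar] at this
  cases Y <;> simp [I1] at this hY

lemma not_setVar_I2 {Y : V3} {b : Bool} (hY : Y ≠ V3.S2) :
    setVar I2 Y b ∉ Ishell := by
  intro h
  have := congrFun (setVar_I2 h) Y
  simp [setVar] at this
  cases Y <;> simp [I2] at this hY

/-- The shell-game GSEM satisfies all (instantiable) axioms of `AX⁺`, yet no
SEM over the same signature has the same outcomes on the allowed interventions:
finite GSEMs with restricted allowed interventions are strictly more expressive
than SEMs. -/
theorem stmt13 :
    SatisfiesAXplusOn Fshell Ishell ∧
      ¬ ∃ M : SEM Unit V3 Rb,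
        ∀ (u : Unit), ∀ I ∈ Ishell, M.outcomes u I = Fshell u I := by
  constructor
  · refine ⟨?_, ?_, ?_, ?_⟩
    · -- D3
      intro u I hI W w hsv S t ⟨o, ho, how, hot⟩
      have heq : setVar I W w = I := by
        rcases mem_Ishell hI with h | h <;> subst h
        · exact setVar_I1 hsv
        · exact setVar_I2 hsv
      refine ⟨o, ?_, hot⟩
      rw [heq]
      exact ho
    · -- D4
      intro u I hI o ho v a hva
      rcases mem_Ishell hI with h | h <;> subst h
      · rw [Fshell_I1] at ho
        rw [ho]
        cases v <;> simp_all [I1, v0]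
      · rw [Fshell_I2] at ho
        rw [ho]
        cases v <;> simp_all [I2, v1]
    · -- D5
      intro u I hI W Y hWY hW hY t hsvY hsvW _ _
      exfalso
      rcases mem_Ishell hI with h | h <;> subst h
      · have hY1 : Y ≠ V3.S1 := by
          intro h; apply hY; subst h; simp [dom, I1]
        exact not_setVar_I1 hY1 hsvY
      · have hY2 : Y ≠ V3.S2 := by
          intro h; apply hY; subst h; simp [dom, I2]
        exact not_setVar_I2 hY2 hsvY
    · -- D9
      intro u X I hI hdom
      exfalso
      rcases mem_Ishell hI with h | h <;> subst h
      · cases X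
        · have : V3.S2 ∈ dom I1 := hdom ▸ (by simp : V3.S2 ∈ {v : V3 | v ≠ V3.S1})
          simp [dom, I1] at this
        · have : V3.Z ∈ dom I1 := hdom ▸ (by simp : V3.Z ∈ {v : V3 | v ≠ V3.S2})
          simp [dom, I1] at this
        · have : V3.S2 ∈ dom I1 := hdom ▸ (by simp : V3.S2 ∈ {v : V3 | v ≠ V3.Z})
          simp [dom, I1] at this
      · cases X
        · have : V3.Z ∈ dom I2 := hdom ▸ (by simp : V3.Z ∈ {v : V3 | v ≠ V3.S1})
          simp [dom, I2] at this
        · have : V3.S1 ∈ dom I2 := hdom ▸ (by simp : V3.S1 ∈ {v : V3 | v ≠ V3.S2})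
          simp [dom, I2] at this
        · have : V3.S1 ∈ dom I2 := hdom ▸ (by simp : V3.S1 ∈ {v : V3 | v ≠ V3.Z})
          simp [dom, I2] at this
  · -- No SEM
    rintro ⟨M, hM⟩
    have h1 : v0 ∈ M.outcomes () I1 := by
      rw [hM () I1 (Or.inl rfl), Fshell_I1]; rfl
    have h2 : v1 ∈ M.outcomes () I2 := by
      rw [hM () I2 (Or.inr rfl), Fshell_I2]; rfl
    have e1 := h1 V3.Z
    have e2 := h2 V3.Z
    simp only [I1, I2] at e1 e2
    have hfun : (fun Y (_ : Y ≠ V3.Z) => v0 Y) = (fun Y (_ : Y ≠ V3.Z) => v1 Y) := by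
      funext Y h
      cases Y <;> simp [v0, v1] at h ⊢
    rw [hfun] at e1
    have : v0 V3.Z = v1 V3.Z := e1.trans e2.symm
    simp [v0, v1] at this
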